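/- arXiv:2604.00347 — 2 statements merged into one kernel-verified Lean document; each statement's English description precedes it below -/
import Mathlib

section
/- For a chain of L spin-1/2 sites (where e^{2πi S_j^z} = -1 holds exactly), if |ψ₀⟩ is a translation eigenstate with T|ψ₀⟩ = t|ψ₀⟩ and total S^z eigenvalue 0, then |ψ₁⟩ = U_{2π}|ψ₀⟩ satisfies T|ψ₁⟩ = -t|ψ₁⟩, and hence ⟨ψ₀|ψ₁⟩ = 0. -/
open Complex Matrix BigOperators

noncomputable section

variable (L : ℕ) [NeZero L]

/-- Spin configurations of a chain of `L` spin-1/2 sites: basis of `(ℂ²)^{⊗L}`. -/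
abbrev Config (L : ℕ) := Fin L → Fin 2

/-- Eigenvalue of `S^z` on a single spin-1/2: `+1/2` for up, `-1/2` for down. -/
def szv (x : Fin 2) : ℂ := if x = 0 then 1/2 else -1/2

/-- The (diagonal) operator `S_j^z` acting on site `j` (sites labelled `0,…,L-1`,
corresponding to the physical sites `1,…,L`). -/
def SzSite (j : Fin L) : Matrix (Config L) (Config L) ℂ :=
  Matrix.diagonal fun s => szv (s j)

/-- Total spin `S^z_total = ∑_j S_j^z`. -/
def SzTot : Matrix (Config L) (Config L) ℂ :=
  Matrix.diagonal fun s => ∑ j : Fin L, szv (s j)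

/-- Matrix of a permutation `e` of the basis configurations. -/
def permMat (e : Config L ≃ Config L) : Matrix (Config L) (Config L) ℂ :=
  Matrix.of fun s t => if s = e t then 1 else 0

/-- The cyclic shift on configurations induced by the translation `j ↦ j+1 (mod L)`
of sites: the new configuration has at site `j` the old value at site `j-1`. -/
def shiftConf : Config L ≃ Config L :=
  (Equiv.addRight (1 : Fin L)).arrowCongr (Equiv.refl (Fin 2))

/-- The translation unitary `T` on `(ℂ²)^{⊗L}`. -/
def Tmat : Matrix (Config L) (Config L) ℂ := permMat L (shiftConf L)

/-- The twist operator `U_{2π} = exp((2πi/L) ∑_{j=1}^{L} j S_j^z)` (diagonal). -/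
def Utwist : Matrix (Config L) (Config L) ℂ :=
  Matrix.diagonal fun s =>
    Complex.exp ((2 * Real.pi * I / L) * ∑ j : Fin L, (j.1 + 1 : ℂ) * szv (s j))

lemma permMat_mulVec (e : Config L ≃ Config L) (ψ : Config L → ℂ) (s : Config L) :
    (permMat L e *ᵥ ψ) s = ψ (e.symm s) := by
  simp only [permMat, mulVec, dotProduct, Matrix.of_apply]
  rw [Finset.sum_eq_single (e.symm s)]
  · simp
  · intro b _ hb
    rw [if_neg, zero_mul]
    intro h
    exact hb (by simp [h])
  · simp

lemma shiftConf_symm_apply (s : Config L) (j : Fin L) :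
    (shiftConf L).symm s j = s (j + 1) := by
  simp [shiftConf]

/-- Key phase computation: on configurations with total `S^z = 0`, the twist phase of the
shifted configuration is minus the twist phase. -/
lemma key_phase (s : Config L) (h : ∑ j : Fin L, szv (s j) = 0) :
    Complex.exp ((2 * Real.pi * I / L) * ∑ j : Fin L, (j.1 + 1 : ℂ) * szv (s (j + 1))) =
    - Complex.exp ((2 * Real.pi * I / L) * ∑ j : Fin L, (j.1 + 1 : ℂ) * szv (s j)) := by
  obtain ⟨n, rfl⟩ := Nat.exists_eq_succ_of_ne_zero (NeZero.ne L)
  set A : ℂ := ∑ j : Fin (n+1), (j.1 + 1 : ℂ) * szv (s j) with hA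
  have hre : ∑ j : Fin (n+1), (j.1 + 1 : ℂ) * szv (s (j + 1))
      = ∑ k : Fin (n+1), (((k - 1).1 : ℂ) + 1) * szv (s k) := by
    apply Fintype.sum_equiv (Equiv.addRight (1 : Fin (n+1)))
    intro j
    simp [add_sub_cancel_right]
  have hval : ∀ k : Fin (n+1), (((k - 1).1 : ℂ) + 1) = (k.1 : ℂ) + (if k = 0 then ((n+1 : ℕ) : ℂ) else 0) := by
    intro k
    rw [Fin.coe_sub_one]
    by_cases hk : k = 0
    · simp [hk]
    · rw [if_neg hk, if_neg hk, add_zero]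
      have hk1 : 1 ≤ k.1 := Nat.one_le_iff_ne_zero.mpr (fun h0 => hk (Fin.ext h0))
      push_cast [Nat.cast_sub hk1]
      ring
  have hsum : ∑ j : Fin (n+1), (j.1 + 1 : ℂ) * szv (s (j + 1))
      = A + ((n+1 : ℕ) : ℂ) * szv (s 0) := by
    rw [hre]
    simp only [hval, add_mul, ite_mul, zero_mul]
    rw [Finset.sum_add_distrib, Finset.sum_ite_eq' Finset.univ (0 : Fin (n+1))]
    simp only [Finset.mem_univ, if_true]
    congr 1
    have : ∑ k : Fin (n+1), (k.1 : ℂ) * szv (s k)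
        = ∑ k : Fin (n+1), ((k.1 + 1 : ℂ) * szv (s k) - szv (s k)) := by
      apply Finset.sum_congr rfl; intro k _; ring
    rw [this, Finset.sum_sub_distrib, h, sub_zero]
  have hLne : ((n : ℂ) + 1) ≠ 0 := by
    exact_mod_cast Nat.succ_ne_zero n
  rw [hsum, mul_add, Complex.exp_add]
  have hphase : (2 * (Real.pi : ℂ) * I / ((n+1 : ℕ) : ℂ)) * (((n+1 : ℕ) : ℂ) * szv (s 0))
      = 2 * Real.pi * I * szv (s 0) := by
    push_cast
    field_simp
  rw [hphase]
  have hm1 : Complex.exp (2 * Real.pi * I * szv (s 0)) = -1 := by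
    unfold szv
    by_cases h0 : s 0 = 0
    · rw [if_pos h0]
      have : (2 : ℂ) * Real.pi * I * (1/2) = Real.pi * I := by ring
      rw [this, Complex.exp_pi_mul_I]
    · rw [if_neg h0]
      have : (2 : ℂ) * Real.pi * I * (-1/2) = -(Real.pi * I) := by ring
      rw [this, Complex.exp_neg, Complex.exp_pi_mul_I]
      norm_num
  rw [hm1]
  ring

/-- if `|ψ₀⟩` is a translation eigenstate `T|ψ₀⟩ = t|ψ₀⟩` with total `S^z = 0`,
then `|ψ₁⟩ = U_{2π}|ψ₀⟩` satisfies `T|ψ₁⟩ = -t|ψ₁⟩`, and hence `⟨ψ₀|ψ₁⟩ = 0`. -/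
theorem stmt_1 (L : ℕ) [NeZero L] (t : ℂ) (ψ : Config L → ℂ) (hψ : ψ ≠ 0)
    (hT : (Tmat L) *ᵥ ψ = t • ψ) (hS : (SzTot L) *ᵥ ψ = 0) :
    (Tmat L) *ᵥ ((Utwist L) *ᵥ ψ) = (-t) • ((Utwist L) *ᵥ ψ) ∧
    star ψ ⬝ᵥ ((Utwist L) *ᵥ ψ) = 0 := by
  set u : Config L → ℂ := fun s =>
    Complex.exp ((2 * Real.pi * I / L) * ∑ j : Fin L, (j.1 + 1 : ℂ) * szv (s j)) with hu
  have hUψ : ∀ s, ((Utwist L) *ᵥ ψ) s = u s * ψ s := by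
    intro s; rw [Utwist, mulVec_diagonal]
  have hT' : ∀ s, ψ ((shiftConf L).symm s) = t * ψ s := by
    intro s
    have := congrFun hT s
    rw [Tmat, permMat_mulVec] at this
    simpa using this
  have hS' : ∀ s, ψ s ≠ 0 → ∑ j : Fin L, szv (s j) = 0 := by
    intro s hs
    have := congrFun hS s
    rw [SzTot, mulVec_diagonal] at this
    rcases mul_eq_zero.mp this with h | h
    · exact h
    · exact absurd h hs
  have husymm : ∀ s, u ((shiftConf L).symm s)
      = Complex.exp ((2 * Real.pi * I / L) * ∑ j : Fin L, (j.1 + 1 : ℂ) * szv (s (j + 1))) := by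
    intro s
    simp only [hu, shiftConf_symm_apply]
  have part1 : (Tmat L) *ᵥ ((Utwist L) *ᵥ ψ) = (-t) • ((Utwist L) *ᵥ ψ) := by
    funext s
    rw [Tmat, permMat_mulVec, hUψ, hT']
    simp only [Pi.smul_apply, smul_eq_mul, hUψ]
    by_cases hs : ψ s = 0
    · rw [hs]; ring
    · rw [husymm, key_phase L s (hS' s hs)]
      simp only [hu]
      ring
  refine ⟨part1, ?_⟩
  set x : ℂ := star ψ ⬝ᵥ ((Utwist L) *ᵥ ψ) with hx
  have hrw : x = ∑ s : Config L, (starRingEnd ℂ) (ψ s) * (u s * ψ s) := by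
    rw [hx, dotProduct]
    refine Finset.sum_congr rfl fun s _ => ?_
    rw [hUψ]
    rfl
  have hrw2 : x = ∑ s : Config L, (starRingEnd ℂ) (ψ ((shiftConf L).symm s))
      * (u ((shiftConf L).symm s) * ψ ((shiftConf L).symm s)) := by
    rw [hrw]
    exact (Fintype.sum_equiv (shiftConf L).symm _ _ (fun s => rfl)).symm
  have hstep : ∀ s, u ((shiftConf L).symm s) * ψ ((shiftConf L).symm s) = -t * (u s * ψ s) := by
    intro s
    have := congrFun part1 s
    rw [Tmat, permMat_mulVec, hUψ] at this
    simp only [Pi.smul_apply, smul_eq_mul, hUψ] at this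
    rw [this]
  have heq : x = -(t * (starRingEnd ℂ) t) * x := by
    calc x = ∑ s : Config L, (starRingEnd ℂ) (ψ ((shiftConf L).symm s))
        * (u ((shiftConf L).symm s) * ψ ((shiftConf L).symm s)) := hrw2
      _ = ∑ s : Config L, -(t * (starRingEnd ℂ) t) * ((starRingEnd ℂ) (ψ s) * (u s * ψ s)) := by
          refine Finset.sum_congr rfl fun s _ => ?_
          rw [hstep, hT', RingHom.map_mul]
          ring
      _ = -(t * (starRingEnd ℂ) t) * ∑ s : Config L, (starRingEnd ℂ) (ψ s) * (u s * ψ s) := by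
          rw [Finset.mul_sum]
      _ = -(t * (starRingEnd ℂ) t) * x := by rw [← hrw]
  have hfac : (1 + t * (starRingEnd ℂ) t) * x = 0 := by
    rw [add_mul, one_mul]
    nth_rewrite 1 [heq]
    ring
  have hne : (1 + t * (starRingEnd ℂ) t) ≠ 0 := by
    rw [Complex.mul_conj]
    intro h
    have := congrArg Complex.re h
    simp at this
    nlinarith [Complex.normSq_nonneg t, this]
  exact (mul_eq_zero.mp hfac).resolve_left hne

end
end

section
/- Suppose a unitary V and a unitary W on a finite-dimensional Hilbert space satisfy V W = -W V, and suppose both commute with a Hermitian operator H (i.e., V and W are symmetries of H). Then every eigenspace of H has even dimension; in particular no eigenvalue of H is non-degenerate. -/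
/-!
On an eigenspace of `H` of dimension `d`, both `V` and `W` restrict to invertible maps, and
taking determinants in `VW = -WV` gives `det V det W = (-1)^d det W det V`, so `(-1)^d = 1`.
-/

open Matrix Module Set

namespace Module.End

variable {K M : Type*} [Field K] [AddCommGroup M] [Module K M]

theorem even_finrank_of_anticommute (hK : (-1 : K) ≠ 1) {A B : End K M}
    (hA : IsUnit A) (hB : IsUnit B) (hAB : A * B = -(B * A)) : Even (finrank K M) := by
  have hdet : (-1) ^ finrank K M * (A * B).det = (A * B).det :=
    calc (-1) ^ finrank K M * (A * B).det
        = (-1) ^ finrank K M * (B * A).det := by rw [map_mul, map_mul, mul_comm (LinearMap.det A)]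
      _ = ((-1 : K) • (B * A)).det := (LinearMap.det_smul _ _).symm
      _ = (A * B).det := by rw [neg_one_smul, hAB]
  have hdet_ne : (A * B).det ≠ 0 := (LinearMap.isUnit_det _ (hA.mul hB)).ne_zero
  exact (neg_one_pow_eq_one_iff_even hK).mp ((mul_eq_right₀ hdet_ne).mp hdet)

theorem isUnit_restrict [FiniteDimensional K M] {A : End K M} (hA : IsUnit A)
    {p : Submodule K M} (hAp : MapsTo A p p) : IsUnit (A.restrict hAp) := by
  have hinj : Function.Injective (A.restrict hAp) := fun x y hxy =>
    Subtype.ext (((isUnit_iff A).mp hA).injective (congrArg Subtype.val hxy))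
  exact (isUnit_iff _).mpr ⟨hinj, LinearMap.injective_iff_surjective.mp hinj⟩

theorem even_finrank_of_anticommute_of_mapsTo [FiniteDimensional K M] (hK : (-1 : K) ≠ 1)
    {A B : End K M} (hA : IsUnit A) (hB : IsUnit B) (hAB : A * B = -(B * A))
    {p : Submodule K M} (hAp : MapsTo A p p) (hBp : MapsTo B p p) : Even (finrank K p) := by
  refine even_finrank_of_anticommute hK (isUnit_restrict hA hAp) (isUnit_restrict hB hBp) ?_
  ext x
  exact congr($hAB x)

end Module.End

theorem Matrix.isUnit_toLin'_of_mem_unitaryGroup {n : Type*} [Fintype n] [DecidableEq n]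
    {U : Matrix n n ℂ} (hU : U ∈ unitaryGroup n ℂ) : IsUnit (toLin' U) :=
  (Unitary.toUnits ⟨U, hU⟩).isUnit.map toLinAlgEquiv'

theorem stmt_3_general {n : Type*} [Fintype n] [DecidableEq n]
    (H V W : Matrix n n ℂ)
    (hV : V ∈ Matrix.unitaryGroup n ℂ) (hW : W ∈ Matrix.unitaryGroup n ℂ)
    (hVW : V * W = - (W * V)) (hVH : V * H = H * V) (hWH : W * H = H * W) :
    (∀ μ : ℂ, Even (Module.finrank ℂ (Module.End.eigenspace (Matrix.toLin' H) μ))) ∧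
    ∀ μ : ℂ, Module.End.HasEigenvalue (Matrix.toLin' H) μ →
      Module.finrank ℂ (Module.End.eigenspace (Matrix.toLin' H) μ) ≠ 1 := by
  have hanti : toLin' V * toLin' W = -(toLin' W * toLin' V) := by
    have h := congrArg toLinAlgEquiv' hVW
    rw [map_neg, map_mul, map_mul] at h
    exact h
  have hcomm {A : Matrix n n ℂ} (hA : A * H = H * A) : Commute (toLin' H) (toLin' A) :=
    Commute.map (show Commute H A from hA.symm) toLinAlgEquiv'
  have heven (μ : ℂ) : Even (finrank ℂ (End.eigenspace (toLin' H) μ)) :=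
    End.even_finrank_of_anticommute_of_mapsTo (by norm_num) (isUnit_toLin'_of_mem_unitaryGroup hV)
      (isUnit_toLin'_of_mem_unitaryGroup hW) hanti
      (End.mapsTo_genEigenspace_of_comm (hcomm hVH) μ 1)
      (End.mapsTo_genEigenspace_of_comm (hcomm hWH) μ 1)
  exact ⟨heven, fun μ _ hone => Nat.not_even_one (hone ▸ heven μ)⟩

/-- if unitaries `V, W` on a finite-dimensional Hilbert space anticommute,
`VW = -WV`, and both commute with a Hermitian operator `H`, then every eigenspace of `H`
has even dimension; in particular no eigenvalue of `H` is non-degenerate. -/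
theorem stmt_3 {n : Type*} [Fintype n] [DecidableEq n]
    (H V W : Matrix n n ℂ) (hH : H.IsHermitian)
    (hV : V ∈ Matrix.unitaryGroup n ℂ) (hW : W ∈ Matrix.unitaryGroup n ℂ)
    (hVW : V * W = - (W * V)) (hVH : V * H = H * V) (hWH : W * H = H * W) :
    (∀ μ : ℂ, Even (Module.finrank ℂ (Module.End.eigenspace (Matrix.toLin' H) μ))) ∧
    ∀ μ : ℂ, Module.End.HasEigenvalue (Matrix.toLin' H) μ →
      Module.finrank ℂ (Module.End.eigenspace (Matrix.toLin' H) μ) ≠ 1 :=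
  stmt_3_general H V W hV hW hVW hVH hWH
end
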